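/- arXiv:1603.05489 — 3 statements merged into one kernel-verified Lean document; each statement's English description precedes it below -/
import Mathlib

section
/- If Banach spaces E and F contain complemented subspaces isomorphic to M and N respectively, then the quotient space L(E;F)/L_K(E;F) contains a complemented subspace isomorphic to L(M;N)/L_K(M;N). -/
/-!
The operators `T ↦ A₂ ∘ T ∘ B₁` and `T ↦ B₂ ∘ T ∘ A₁` send compact operators to compact operators,
so they descend to the quotients by the compact operators; their composite is
`T ↦ (B₂ ∘ A₂) ∘ T ∘ (B₁ ∘ A₁) = T`, so the descended maps compose to the identity too.
-/

open scoped ENNReal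

noncomputable section

/-- A normed space `E` has the approximation property if for every compact set `K` and `ε > 0`
there is a finite rank bounded operator `T : E → E` with `‖T x - x‖ < ε` on `K`. -/
def HasAP (𝕜 E : Type*) [NontriviallyNormedField 𝕜] [SeminormedAddCommGroup E]
    [NormedSpace 𝕜 E] : Prop :=
  ∀ K : Set E, IsCompact K → ∀ ε : ℝ, 0 < ε →
    ∃ T : E →L[𝕜] E, FiniteDimensional 𝕜 (LinearMap.range (T : E →ₗ[𝕜] E)) ∧
      ∀ x ∈ K, ‖T x - x‖ < ε

namespace Submodule

variable {R M M₂ M₃ : Type*} [Ring R]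
  [TopologicalSpace M] [AddCommGroup M] [Module R M]
  [TopologicalSpace M₂] [AddCommGroup M₂] [Module R M₂]
  [TopologicalSpace M₃] [AddCommGroup M₃] [Module R M₃]
  (p : Submodule R M) (q : Submodule R M₂) (r : Submodule R M₃)

def mapQL (f : M →L[R] M₂) (h : p ≤ q.comap (f : M →ₗ[R] M₂)) : M ⧸ p →L[R] M₂ ⧸ q :=
  p.liftQL (q.mkQL.comp f) fun x hx => by simpa [Quotient.mk_eq_zero] using h hx

theorem mapQL_comp (f : M →L[R] M₂) (g : M₂ →L[R] M₃) (hf : p ≤ q.comap (f : M →ₗ[R] M₂))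
    (hg : q ≤ r.comap (g : M₂ →ₗ[R] M₃)) :
    (q.mapQL r g hg).comp (p.mapQL q f hf) = p.mapQL r (g.comp f) (hf.trans (comap_mono hg)) :=
  ContinuousLinearMap.coe_injective <| linearMap_qext p rfl

@[simp]
theorem mapQL_id (h : p ≤ p.comap (ContinuousLinearMap.id R M : M →ₗ[R] M)) :
    p.mapQL p (ContinuousLinearMap.id R M) h = ContinuousLinearMap.id R (M ⧸ p) :=
  ContinuousLinearMap.coe_injective <| linearMap_qext p rfl

theorem mapQL_comp_mapQL_of_comp_eq_id {f : M →L[R] M₂} {g : M₂ →L[R] M}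
    (hgf : g.comp f = ContinuousLinearMap.id R M) (hf : p ≤ q.comap (f : M →ₗ[R] M₂))
    (hg : q ≤ p.comap (g : M₂ →ₗ[R] M)) :
    (q.mapQL p g hg).comp (p.mapQL q f hf) = ContinuousLinearMap.id R (M ⧸ p) := by
  simp_rw [mapQL_comp, hgf, mapQL_id]

end Submodule

namespace ContinuousLinearMap

variable {𝕜 W X Y Z : Type*} [NontriviallyNormedField 𝕜]
  [SeminormedAddCommGroup W] [NormedSpace 𝕜 W] [SeminormedAddCommGroup X] [NormedSpace 𝕜 X]
  [SeminormedAddCommGroup Y] [NormedSpace 𝕜 Y] [SeminormedAddCommGroup Z] [NormedSpace 𝕜 Z]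

/-- `T ↦ A ∘ T ∘ B`. -/
def sandwich (A : Y →L[𝕜] Z) (B : W →L[𝕜] X) : (X →L[𝕜] Y) →L[𝕜] (W →L[𝕜] Z) :=
  (compL 𝕜 W Y Z A).comp ((compL 𝕜 W X Y).flip B)

theorem sandwich_comp_sandwich {V U : Type*} [SeminormedAddCommGroup V] [NormedSpace 𝕜 V]
    [SeminormedAddCommGroup U] [NormedSpace 𝕜 U] (A : Y →L[𝕜] Z) (B : W →L[𝕜] X)
    (A' : Z →L[𝕜] U) (B' : V →L[𝕜] W) :
    (sandwich A' B').comp (sandwich A B) = sandwich (A'.comp A) (B.comp B') :=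
  rfl

@[simp]
theorem sandwich_id : sandwich (.id 𝕜 Y) (.id 𝕜 X) = .id 𝕜 (X →L[𝕜] Y) :=
  rfl

theorem compactOperator_le_comap_sandwich (A : Y →L[𝕜] Z) (B : W →L[𝕜] X) :
    compactOperator (RingHom.id 𝕜) X Y ≤
      (compactOperator (RingHom.id 𝕜) W Z).comap (sandwich A B : (X →L[𝕜] Y) →ₗ[𝕜] (W →L[𝕜] Z)) :=
  fun T (hT : IsCompactOperator T) => (hT.comp_clm B).clm_comp A

end ContinuousLinearMap

theorem quotient_opSpace_complemented_general (𝕜 E F M N : Type*) [RCLike 𝕜]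
    [NormedAddCommGroup E] [NormedSpace 𝕜 E]
    [NormedAddCommGroup F] [NormedSpace 𝕜 F]
    [NormedAddCommGroup M] [NormedSpace 𝕜 M]
    [NormedAddCommGroup N] [NormedSpace 𝕜 N]
    (hM : ∃ (A₁ : M →L[𝕜] E) (B₁ : E →L[𝕜] M), B₁.comp A₁ = ContinuousLinearMap.id 𝕜 M)
    (hN : ∃ (A₂ : N →L[𝕜] F) (B₂ : F →L[𝕜] N), B₂.comp A₂ = ContinuousLinearMap.id 𝕜 N) :
    ∃ (C : ((M →L[𝕜] N) ⧸ compactOperator (RingHom.id 𝕜) M N) →L[𝕜]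
            ((E →L[𝕜] F) ⧸ compactOperator (RingHom.id 𝕜) E F))
      (D : ((E →L[𝕜] F) ⧸ compactOperator (RingHom.id 𝕜) E F) →L[𝕜]
            ((M →L[𝕜] N) ⧸ compactOperator (RingHom.id 𝕜) M N)),
      D.comp C = ContinuousLinearMap.id 𝕜 ((M →L[𝕜] N) ⧸ compactOperator (RingHom.id 𝕜) M N) := by
  obtain ⟨A₁, B₁, hBA₁⟩ := hM
  obtain ⟨A₂, B₂, hBA₂⟩ := hN
  have retract : (B₂.sandwich A₁).comp (A₂.sandwich B₁) = ContinuousLinearMap.id 𝕜 _ := by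
    rw [ContinuousLinearMap.sandwich_comp_sandwich, hBA₁, hBA₂, ContinuousLinearMap.sandwich_id]
  exact ⟨_, _, Submodule.mapQL_comp_mapQL_of_comp_eq_id _ _ retract
    (A₂.compactOperator_le_comap_sandwich B₁) (B₂.compactOperator_le_comap_sandwich A₁)⟩

/-- If `E` and `F` contain complemented subspaces isomorphic to `M` and `N` respectively, then
the Calkin-type quotient `L(E;F)/L_K(E;F)` contains a complemented subspace isomorphic to
`L(M;N)/L_K(M;N)`. -/
theorem quotient_opSpace_complemented (𝕜 E F M N : Type*) [RCLike 𝕜]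
    [NormedAddCommGroup E] [NormedSpace 𝕜 E] [CompleteSpace E]
    [NormedAddCommGroup F] [NormedSpace 𝕜 F] [CompleteSpace F]
    [NormedAddCommGroup M] [NormedSpace 𝕜 M] [CompleteSpace M]
    [NormedAddCommGroup N] [NormedSpace 𝕜 N] [CompleteSpace N]
    (hM : ∃ (A₁ : M →L[𝕜] E) (B₁ : E →L[𝕜] M), B₁.comp A₁ = ContinuousLinearMap.id 𝕜 M)
    (hN : ∃ (A₂ : N →L[𝕜] F) (B₂ : F →L[𝕜] N), B₂.comp A₂ = ContinuousLinearMap.id 𝕜 N) :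
    ∃ (C : ((M →L[𝕜] N) ⧸ compactOperator (RingHom.id 𝕜) M N) →L[𝕜]
            ((E →L[𝕜] F) ⧸ compactOperator (RingHom.id 𝕜) E F))
      (D : ((E →L[𝕜] F) ⧸ compactOperator (RingHom.id 𝕜) E F) →L[𝕜]
            ((M →L[𝕜] N) ⧸ compactOperator (RingHom.id 𝕜) M N)),
      D.comp C = ContinuousLinearMap.id 𝕜 ((M →L[𝕜] N) ⧸ compactOperator (RingHom.id 𝕜) M N) :=
  quotient_opSpace_complemented_general 𝕜 E F M N hM hN
end
end

section
/- If 1 < q < p < ∞, then every bounded linear operator from ℓ_p to ℓ_q is compact, so L(ℓ_p;ℓ_q) = L_K(ℓ_p;ℓ_q) and the quotient L(ℓ_p;ℓ_q)/L_K(ℓ_p;ℓ_q) is the zero space. -/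
open scoped ENNReal

noncomputable section

/-!
If `T : ℓ_p → ℓ_q` is not compact, there are `x_n` in the unit ball such that `(T x_n)` has no
Cauchy subsequence. Along a subsequence on which `x_n` and `T x_n` converge coordinatewise,
differences of the `x_n` give a bounded, coordinatewise null sequence `D_n` with `T D_n`
coordinatewise null and `‖T D_n‖ ≥ δ > 0`. A gliding hump makes `D_n` and `T D_n` simultaneously
summably small perturbations of disjointly supported blocks, so that
`‖∑_{n<N} D_n‖_p ≲ N^{1/p}` while `‖∑_{n<N} T D_n‖_q ≳ N^{1/q}`: this forces `p ≤ q`.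
-/

open Filter Topology Finset

theorem totallyBounded_of_forall_exists_cauchySeq {X : Type*} [UniformSpace X] {s : Set X}
    (h : ∀ u : ℕ → X, (∀ n, u n ∈ s) → ∃ φ : ℕ → ℕ, StrictMono φ ∧ CauchySeq (u ∘ φ)) :
    TotallyBounded s := by
  intro V hV
  by_contra! hs
  obtain ⟨u, hus, hu⟩ : ∃ u : ℕ → X, (∀ n, u n ∈ s) ∧
      ∀ n m, m < n → u m ∉ UniformSpace.ball (u n) V := by
    simp only [Set.not_subset, Set.mem_iUnion₂, not_exists, exists_prop] at hs
    simpa only [forall_and, Set.forall_mem_image, not_and] using!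
      Set.seq_of_forall_finite_exists hs
  obtain ⟨φ, hφ, hcauchy⟩ := h u hus
  obtain ⟨N, hN⟩ := hcauchy.mem_entourage hV
  exact hu (φ (N + 1)) (φ N) (hφ N.lt_add_one) (hN (N + 1) N N.le_succ le_rfl)

theorem exists_strictMono_tendsto_pi_of_norm_le {ι G : Type*} [Countable ι]
    [NormedAddCommGroup G] [ProperSpace G] (u : ℕ → ι → G) {R : ℝ} (hu : ∀ n i, ‖u n i‖ ≤ R) :
    ∃ (L : ι → G) (φ : ℕ → ℕ), StrictMono φ ∧ Tendsto (u ∘ φ) atTop (𝓝 L) := by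
  obtain ⟨L, -, φ, hφ, hL⟩ :=
    (isCompact_univ_pi fun _ => isCompact_closedBall (0 : G) R).tendsto_subseq fun n =>
      Set.mem_univ_pi.2 fun i => mem_closedBall_zero_iff.2 (hu n i)
  exact ⟨L, φ, hφ, hL⟩

theorem le_of_forall_mul_rpow_le {a b c A B : ℝ} (hb : 0 < b) (hc : 0 < c)
    (h : ∀ N : ℕ, c * (N : ℝ) ^ a ≤ A * (N : ℝ) ^ b + B) : a ≤ b := by
  by_contra! hab
  have hdiff : Tendsto (fun x : ℝ => x ^ b * (c * x ^ (a - b) - A)) atTop atTop :=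
    (tendsto_rpow_atTop hb).atTop_mul_atTop₀ <| tendsto_atTop_add_const_right _ (-A)
      ((tendsto_rpow_atTop (sub_pos.2 hab)).const_mul_atTop hc)
  obtain ⟨N, hN0, hN⟩ := ((eventually_gt_atTop 0).and
    ((hdiff.comp tendsto_natCast_atTop_atTop).eventually_gt_atTop B)).exists
  replace hN0 : (0 : ℝ) < N := Nat.cast_pos.2 hN0
  have hsplit :
      (N : ℝ) ^ b * (c * (N : ℝ) ^ (a - b) - A) = c * (N : ℝ) ^ a - A * (N : ℝ) ^ b := by
    rw [mul_sub, ← mul_assoc, mul_comm _ c, mul_assoc, ← Real.rpow_add hN0]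
    ring_nf
  simp only [Function.comp_apply, hsplit] at hN
  linarith [h N]

theorem exists_seq_head_tail_lt {h t : ℕ → ℕ → ℝ}
    (hh : ∀ c, Tendsto (fun m => h m c) atTop (𝓝 0)) (ht : ∀ m, Tendsto (t m) atTop (𝓝 0))
    {ε : ℕ → ℝ} (hε : ∀ n, 0 < ε n) :
    ∃ m k : ℕ → ℕ, StrictMono k ∧ ∀ n, h (m n) (k n) < ε n ∧ t (m n) (k (n + 1)) < ε n := by
  choose M hM using fun n c => ((hh c).eventually (gt_mem_nhds (hε n))).exists
  choose K hKc hK using fun n m c =>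
    ((eventually_gt_atTop c).and ((ht m).eventually (gt_mem_nhds (hε n)))).exists
  -- Given the cut `k n`, take an index `m n` with small head below `k n`, then a cut
  -- `k (n + 1)` beyond which that same term has small tail.
  let k : ℕ → ℕ := fun n => Nat.rec 0 (fun n c => K n (M n c) c) n
  exact ⟨fun n => M n (k n), k, strictMono_nat_of_lt_succ fun n => hKc _ _ _,
    fun n => ⟨hM _ _, hK _ _ _⟩⟩

namespace lp

section Blocks

variable {α E : Type*} [NormedAddCommGroup E] {r : ℝ≥0∞}

theorem sum_single_apply [DecidableEq α] (s : Finset α) (f : α → E) (i : α) :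
    (∑ j ∈ s, lp.single r j (f j) : lp (fun _ : α => E) r) i = if i ∈ s then f i else 0 := by
  simp only [lp.coeFn_sum, Finset.sum_apply, lp.coeFn_single, Finset.sum_pi_single]

theorem support_sum_single_subset [DecidableEq α] (s : Finset α) (f : α → E) :
    Function.support ⇑(∑ j ∈ s, lp.single r j (f j) : lp (fun _ : α => E) r) ⊆ s := by
  intro i hi
  by_contra his
  exact hi (by rw [sum_single_apply, if_neg (mod_cast his)])

theorem norm_sum_rpow_of_pairwiseDisjoint (hr : 0 < r.toReal) {ι : Type*} (s : Finset ι)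
    (f : ι → lp (fun _ : α => E) r)
    (hf : (s : Set ι).PairwiseDisjoint fun n => Function.support ⇑(f n)) :
    ‖∑ n ∈ s, f n‖ ^ r.toReal = ∑ n ∈ s, ‖f n‖ ^ r.toReal := by
  have hpoint : ∀ i, ‖∑ n ∈ s, f n i‖ ^ r.toReal = ∑ n ∈ s, ‖f n i‖ ^ r.toReal := by
    intro i
    by_cases h : ∃ n ∈ s, f n i ≠ 0
    · obtain ⟨n, hns, hn⟩ := h
      have hzero : ∀ m ∈ s, m ≠ n → f m i = 0 := fun m hms hmn =>
        Function.notMem_support.1 fun him =>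
          Set.disjoint_left.1 (hf hms hns hmn) him hn
      rw [Finset.sum_eq_single_of_mem n hns hzero, Finset.sum_eq_single_of_mem n hns
        fun m hms hmn => by simp [hzero m hms hmn, Real.zero_rpow hr.ne']]
    · push Not at h
      rw [Finset.sum_eq_zero h, Finset.sum_eq_zero fun n hn => by simp [h n hn, hr.ne']]
      simp [hr.ne']
  simp_rw [lp.norm_rpow_eq_tsum hr, lp.coeFn_sum, Finset.sum_apply, hpoint]
  exact Summable.tsum_finsetSum fun n _ => (lp.memℓp (f n)).summable hr

theorem pairwiseDisjoint_support_sum_Ico_single {k : ℕ → ℕ} (hk : Monotone k) (f : ℕ → ℕ → E)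
    (s : Set ℕ) :
    s.PairwiseDisjoint fun n =>
      Function.support ⇑(∑ i ∈ Ico (k n) (k (n + 1)), lp.single r i (f n i) :
        lp (fun _ : ℕ => E) r) := by
  intro m _ n _ hmn
  have hIco := hk.pairwise_disjoint_on_Ico_succ hmn
  simp only [Order.succ_eq_add_one] at hIco
  exact hIco.mono ((support_sum_single_subset _ _).trans (by simp))
    ((support_sum_single_subset _ _).trans (by simp))

variable [Fact (1 ≤ r)]

theorem norm_sum_single_le (hr : 0 < r.toReal) [DecidableEq α] (f : lp (fun _ : α => E) r)
    (s : Finset α) : ‖∑ i ∈ s, lp.single r i (f i)‖ ≤ ‖f‖ := by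
  rw [← Real.rpow_le_rpow_iff (norm_nonneg _) (norm_nonneg _) hr, lp.norm_sum_single hr]
  exact lp.sum_rpow_le_norm_rpow hr f s

theorem norm_sum_le_of_pairwiseDisjoint (hr : 0 < r.toReal) {ι : Type*} (s : Finset ι)
    (f : ι → lp (fun _ : α => E) r)
    (hf : (s : Set ι).PairwiseDisjoint fun n => Function.support ⇑(f n)) {C : ℝ}
    (hC : ∀ n ∈ s, ‖f n‖ ≤ C) : ‖∑ n ∈ s, f n‖ ≤ C * (#s : ℝ) ^ r.toReal⁻¹ := by
  obtain rfl | ⟨n, hn⟩ := s.eq_empty_or_nonempty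
  · simp [(inv_pos.2 hr).ne']
  have hC0 : 0 ≤ C := (norm_nonneg _).trans (hC n hn)
  rw [← Real.rpow_le_rpow_iff (norm_nonneg _) (by positivity) hr,
    norm_sum_rpow_of_pairwiseDisjoint hr s f hf, Real.mul_rpow hC0 (by positivity),
    Real.rpow_inv_rpow (by positivity) hr.ne', mul_comm, ← nsmul_eq_mul, ← Finset.sum_const]
  exact Finset.sum_le_sum fun n hn => Real.rpow_le_rpow (norm_nonneg _) (hC n hn) hr.le

theorem le_norm_sum_of_pairwiseDisjoint (hr : 0 < r.toReal) {ι : Type*} (s : Finset ι)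
    (f : ι → lp (fun _ : α => E) r)
    (hf : (s : Set ι).PairwiseDisjoint fun n => Function.support ⇑(f n)) {c : ℝ} (hc : 0 ≤ c)
    (hcf : ∀ n ∈ s, c ≤ ‖f n‖) : c * (#s : ℝ) ^ r.toReal⁻¹ ≤ ‖∑ n ∈ s, f n‖ := by
  rw [← Real.rpow_le_rpow_iff (by positivity) (norm_nonneg _) hr,
    norm_sum_rpow_of_pairwiseDisjoint hr s f hf, Real.mul_rpow hc (by positivity),
    Real.rpow_inv_rpow (by positivity) hr.ne', mul_comm, ← nsmul_eq_mul, ← Finset.sum_const]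
  exact Finset.sum_le_sum fun n hn => Real.rpow_le_rpow hc (hcf n hn) hr.le

theorem norm_sub_sum_Ico_single_le (f : lp (fun _ : ℕ => E) r) {a b : ℕ} (hab : a ≤ b) :
    ‖f - ∑ i ∈ Ico a b, lp.single r i (f i)‖ ≤
      ∑ i ∈ range a, ‖f i‖ + ‖f - ∑ i ∈ range b, lp.single r i (f i)‖ := by
  have hsplit : f - ∑ i ∈ Ico a b, lp.single r i (f i) =
      ∑ i ∈ range a, lp.single r i (f i) + (f - ∑ i ∈ range b, lp.single r i (f i)) := by
    rw [← Finset.sum_range_add_sum_Ico _ hab]; abel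
  rw [hsplit]
  refine (norm_add_le _ _).trans (add_le_add_left ((norm_sum_le _ _).trans_eq ?_) _)
  simp [lp.norm_single (zero_lt_one.trans_le Fact.out)]

theorem tendsto_sum_range_single (hr : r ≠ ∞) (f : lp (fun _ : ℕ => E) r) :
    Tendsto (fun b => ∑ i ∈ range b, lp.single r i (f i)) atTop (𝓝 f) :=
  (lp.hasSum_single hr f).tendsto_sum_nat

end Blocks

section Operators

variable {𝕜 E F : Type*} [NormedAddCommGroup E] [NormedAddCommGroup F] {p q : ℝ≥0∞}
  [Fact (1 ≤ p)] [Fact (1 ≤ q)]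

theorem exists_blocks_approx (hp : p ≠ ∞) (hq : q ≠ ∞)
    {D : ℕ → lp (fun _ : ℕ => E) p} {V : ℕ → lp (fun _ : ℕ => F) q}
    (hD : Tendsto (fun n => ⇑(D n)) atTop (𝓝 0)) (hV : Tendsto (fun n => ⇑(V n)) atTop (𝓝 0))
    {ε : ℕ → ℝ} (hε : ∀ n, 0 < ε n) :
    ∃ m k : ℕ → ℕ, Monotone k ∧ ∀ n,
      ‖D (m n) - ∑ i ∈ Ico (k n) (k (n + 1)), lp.single p i (D (m n) i)‖ < ε n ∧
      ‖V (m n) - ∑ i ∈ Ico (k n) (k (n + 1)), lp.single q i (V (m n) i)‖ < ε n := by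
  obtain ⟨m, k, hk, hmk⟩ := exists_seq_head_tail_lt
    (h := fun m c => ∑ i ∈ range c, (‖D m i‖ + ‖V m i‖))
    (t := fun m c => ‖D m - ∑ i ∈ range c, lp.single p i (D m i)‖ +
      ‖V m - ∑ i ∈ range c, lp.single q i (V m i)‖)
    (fun c => by
      simpa using tendsto_finsetSum (range c) fun i _ =>
        (tendsto_pi_nhds.1 hD i).norm.add (tendsto_pi_nhds.1 hV i).norm)
    (fun m => by
      simpa [norm_sub_rev] using (tendsto_iff_norm_sub_tendsto_zero.1
        (tendsto_sum_range_single hp (D m))).add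
        (tendsto_iff_norm_sub_tendsto_zero.1 (tendsto_sum_range_single hq (V m))))
    (fun n => half_pos (hε n))
  refine ⟨m, k, hk.monotone, fun n => ⟨?_, ?_⟩⟩
  · have hsplit := norm_sub_sum_Ico_single_le (D (m n)) (hk.monotone (n.le_add_right 1))
    have hhead := Finset.sum_le_sum fun i (_ : i ∈ range (k n)) =>
      (le_add_of_nonneg_right (norm_nonneg _) : ‖D (m n) i‖ ≤ ‖D (m n) i‖ + ‖V (m n) i‖)
    linarith [hmk n, norm_nonneg (V (m n) - ∑ i ∈ range (k (n + 1)), lp.single q i (V (m n) i))]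
  · have hsplit := norm_sub_sum_Ico_single_le (V (m n)) (hk.monotone (n.le_add_right 1))
    have hhead := Finset.sum_le_sum fun i (_ : i ∈ range (k n)) =>
      (le_add_of_nonneg_left (norm_nonneg _) : ‖V (m n) i‖ ≤ ‖D (m n) i‖ + ‖V (m n) i‖)
    linarith [hmk n, norm_nonneg (D (m n) - ∑ i ∈ range (k (n + 1)), lp.single p i (D (m n) i))]

variable [NontriviallyNormedField 𝕜] [NormedSpace 𝕜 E] [NormedSpace 𝕜 F]

theorem le_of_forall_le_norm_apply (hp : p ≠ ∞) (hq : q ≠ ∞)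
    (T : lp (fun _ : ℕ => E) p →L[𝕜] lp (fun _ : ℕ => F) q) {D : ℕ → lp (fun _ : ℕ => E) p}
    {C δ : ℝ} (hDC : ∀ n, ‖D n‖ ≤ C) (hD : Tendsto (fun n => ⇑(D n)) atTop (𝓝 0))
    (hTD : Tendsto (fun n => ⇑(T (D n))) atTop (𝓝 0)) (hδ : 0 < δ)
    (hδTD : ∀ n, δ ≤ ‖T (D n)‖) : p ≤ q := by
  have hp0 : 0 < p.toReal := ENNReal.toReal_pos (zero_lt_one.trans_le Fact.out).ne' hp
  have hq0 : 0 < q.toReal := ENNReal.toReal_pos (zero_lt_one.trans_le Fact.out).ne' hq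
  set ε : ℕ → ℝ := fun n => δ / 2 * (1 / 2) ^ n
  have hεδ : ∀ n, ε n ≤ δ / 2 := fun n =>
    mul_le_of_le_one_right (by positivity) (pow_le_one₀ (by norm_num) (by norm_num))
  have hεsum : ∀ N, ∑ n ∈ range N, ε n ≤ δ := fun N => by
    rw [← Finset.mul_sum]
    linarith [mul_le_mul_of_nonneg_left (sum_geometric_two_le N) (by positivity : 0 ≤ δ / 2)]
  obtain ⟨m, k, hk, hmk⟩ := exists_blocks_approx hp hq hD hTD (ε := ε) fun n => by positivity
  set a : ℕ → lp (fun _ : ℕ => E) p := fun n =>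
    ∑ i ∈ Ico (k n) (k (n + 1)), lp.single p i (D (m n) i)
  set b : ℕ → lp (fun _ : ℕ => F) q := fun n =>
    ∑ i ∈ Ico (k n) (k (n + 1)), lp.single q i (T (D (m n)) i)
  have ha : ∀ n, ‖a n‖ ≤ C := fun n => (norm_sum_single_le hp0 _ _).trans (hDC _)
  have hb : ∀ n, δ / 2 ≤ ‖b n‖ := fun n => by
    linarith [norm_sub_norm_le (T (D (m n))) (b n), hδTD (m n), (hmk n).2, hεδ n]
  have key : ∀ N : ℕ,
      δ / 2 * (N : ℝ) ^ q.toReal⁻¹ ≤ ‖T‖ * C * (N : ℝ) ^ p.toReal⁻¹ + (‖T‖ * δ + δ) := by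
    intro N
    have hDa : ‖∑ n ∈ range N, D (m n) - ∑ n ∈ range N, a n‖ ≤ δ := by
      rw [← dist_eq_norm]
      exact (dist_sum_sum_le_of_le _ fun n _ => (dist_eq_norm _ _).trans_le (hmk n).1.le).trans
        (hεsum N)
    have hTDb : ‖∑ n ∈ range N, T (D (m n)) - ∑ n ∈ range N, b n‖ ≤ δ := by
      rw [← dist_eq_norm]
      exact (dist_sum_sum_le_of_le _ fun n _ => (dist_eq_norm _ _).trans_le (hmk n).2.le).trans
        (hεsum N)
    have hau := norm_sum_le_of_pairwiseDisjoint hp0 (range N) a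
      (pairwiseDisjoint_support_sum_Ico_single hk _ _) fun n _ => ha n
    have hbl := le_norm_sum_of_pairwiseDisjoint hq0 (range N) b
      (pairwiseDisjoint_support_sum_Ico_single hk _ _) (by positivity) fun n _ => hb n
    rw [card_range] at hau hbl
    have hu : ‖∑ n ∈ range N, D (m n)‖ ≤ C * (N : ℝ) ^ p.toReal⁻¹ + δ := by
      linarith [norm_le_insert' (∑ n ∈ range N, D (m n)) (∑ n ∈ range N, a n)]
    have hTu := T.le_opNorm_of_le hu
    rw [map_sum] at hTu
    linarith [norm_le_insert (∑ n ∈ range N, T (D (m n))) (∑ n ∈ range N, b n)]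
  have := le_of_forall_mul_rpow_le (inv_pos.2 hp0) (by positivity) key
  rwa [← ENNReal.toReal_le_toReal hp hq, ← inv_le_inv₀ hq0 hp0]

theorem cauchySeq_apply_of_tendsto_coe (hqp : q < p) (hp : p ≠ ∞)
    (T : lp (fun _ : ℕ => E) p →L[𝕜] lp (fun _ : ℕ => F) q) {x : ℕ → lp (fun _ : ℕ => E) p}
    {C : ℝ} (hx : ∀ n, ‖x n‖ ≤ C) {a : ℕ → E} {b : ℕ → F}
    (ha : Tendsto (fun n => ⇑(x n)) atTop (𝓝 a)) (hb : Tendsto (fun n => ⇑(T (x n))) atTop (𝓝 b)) :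
    CauchySeq fun n => T (x n) := by
  rw [Metric.cauchySeq_iff]
  by_contra! hsep
  obtain ⟨δ, hδ, hsep⟩ := hsep
  choose i hi j hj hij using hsep
  have hi' : Tendsto i atTop atTop := tendsto_atTop_mono hi tendsto_id
  have hj' : Tendsto j atTop atTop := tendsto_atTop_mono hj tendsto_id
  have hD : Tendsto (fun N => ⇑(x (i N) - x (j N))) atTop (𝓝 0) := by
    simpa only [Function.comp_apply, lp.coeFn_sub, sub_self] using
      (ha.comp hi').sub (ha.comp hj')
  have hTD : Tendsto (fun N => ⇑(T (x (i N) - x (j N)))) atTop (𝓝 0) := by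
    simpa only [Function.comp_apply, map_sub, lp.coeFn_sub, sub_self] using
      (hb.comp hi').sub (hb.comp hj')
  refine not_le.2 hqp (le_of_forall_le_norm_apply hp (hqp.trans_le le_top).ne T
    (fun N => (norm_sub_le _ _).trans (add_le_add (hx (i N)) (hx (j N)))) hD hTD hδ fun N => ?_)
  rw [map_sub, ← dist_eq_norm]
  exact hij N

theorem isCompactOperator_of_lt [ProperSpace E] [ProperSpace F] (hqp : q < p) (hp : p ≠ ∞)
    (T : lp (fun _ : ℕ => E) p →L[𝕜] lp (fun _ : ℕ => F) q) : IsCompactOperator T := by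
  have hp0 : p ≠ 0 := (zero_lt_one.trans_le Fact.out).ne'
  have hq0 : q ≠ 0 := (zero_lt_one.trans_le Fact.out).ne'
  refine (isCompactOperator_iff_isCompact_closure_image_closedBall
    (T : lp (fun _ : ℕ => E) p →ₗ[𝕜] lp (fun _ : ℕ => F) q) zero_lt_one).2 <|
    (totallyBounded_of_forall_exists_cauchySeq fun y hy => ?_).closure.isCompact_of_isClosed
      isClosed_closure
  choose x hx hxy using hy
  have hx1 : ∀ n, ‖x n‖ ≤ 1 := fun n => mem_closedBall_zero_iff.1 (hx n)
  obtain ⟨L, φ, hφ, hL⟩ := exists_strictMono_tendsto_pi_of_norm_le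
    (fun n i => (x n i, T (x n) i)) (R := max 1 ‖T‖) fun n i => norm_prod_le_iff.2
      ⟨(lp.norm_apply_le_norm hp0 _ i).trans ((hx1 n).trans (le_max_left _ _)),
        (lp.norm_apply_le_norm hq0 _ i).trans
          (((T.le_opNorm_of_le (hx1 n)).trans_eq (mul_one _)).trans (le_max_right _ _))⟩
  refine ⟨φ, hφ, ?_⟩
  have hcauchy := cauchySeq_apply_of_tendsto_coe hqp hp T (x := x ∘ φ) (fun n => hx1 (φ n))
    (tendsto_pi_nhds.2 fun i => (continuous_fst.tendsto _).comp (tendsto_pi_nhds.1 hL i))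
    (tendsto_pi_nhds.2 fun i => (continuous_snd.tendsto _).comp (tendsto_pi_nhds.1 hL i))
  convert hcauchy using 1
  exact funext fun n => (hxy (φ n)).symm

end Operators

end lp

theorem pitt_general (𝕜 : Type*) [RCLike 𝕜] (p q : ℝ≥0∞) [Fact (1 ≤ p)] [Fact (1 ≤ q)]
    (hqp : q < p) (hp : p < ⊤) :
    (∀ T : lp (fun _ : ℕ => 𝕜) p →L[𝕜] lp (fun _ : ℕ => 𝕜) q, IsCompactOperator T) ∧
      compactOperator (RingHom.id 𝕜) (lp (fun _ : ℕ => 𝕜) p) (lp (fun _ : ℕ => 𝕜) q) = ⊤ ∧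
      Subsingleton ((lp (fun _ : ℕ => 𝕜) p →L[𝕜] lp (fun _ : ℕ => 𝕜) q) ⧸
        compactOperator (RingHom.id 𝕜) (lp (fun _ : ℕ => 𝕜) p) (lp (fun _ : ℕ => 𝕜) q)) := by
  have hcompact : ∀ T : lp (fun _ : ℕ => 𝕜) p →L[𝕜] lp (fun _ : ℕ => 𝕜) q, IsCompactOperator T :=
    lp.isCompactOperator_of_lt hqp hp.ne
  have htop : compactOperator (RingHom.id 𝕜) (lp (fun _ : ℕ => 𝕜) p) (lp (fun _ : ℕ => 𝕜) q) = ⊤ :=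
    Submodule.eq_top_iff'.2 hcompact
  exact ⟨hcompact, htop, Submodule.Quotient.subsingleton_iff.2 htop⟩

/-- Pitt's theorem: if `1 < q < p < ∞` then every bounded operator `ℓ_p → ℓ_q` is compact; hence
`L(ℓ_p;ℓ_q) = L_K(ℓ_p;ℓ_q)` and the quotient `L/L_K` is the zero space. -/
theorem pitt (𝕜 : Type*) [RCLike 𝕜] (p q : ℝ≥0∞) [Fact (1 ≤ p)] [Fact (1 ≤ q)]
    (hq : 1 < q) (hqp : q < p) (hp : p < ⊤) :
    (∀ T : lp (fun _ : ℕ => 𝕜) p →L[𝕜] lp (fun _ : ℕ => 𝕜) q, IsCompactOperator T) ∧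
      compactOperator (RingHom.id 𝕜) (lp (fun _ : ℕ => 𝕜) p) (lp (fun _ : ℕ => 𝕜) q) = ⊤ ∧
      Subsingleton ((lp (fun _ : ℕ => 𝕜) p →L[𝕜] lp (fun _ : ℕ => 𝕜) q) ⧸
        compactOperator (RingHom.id 𝕜) (lp (fun _ : ℕ => 𝕜) p) (lp (fun _ : ℕ => 𝕜) q)) :=
  pitt_general 𝕜 p q hqp hp
end
end

section
/- Let E, F, M, N be Banach spaces and n ≥ 1. If E and F contain complemented subspaces isomorphic to M and N respectively, then the quotient P(ⁿE;F)/P_K(ⁿE;F) contains a complemented subspace isomorphic to P(ⁿM;N)/P_K(ⁿM;N). -/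
open scoped ENNReal

noncomputable section

/-- The closed subspace of symmetric continuous `n`-linear maps, our model for the Banach space
`P(ⁿE;F)` of continuous `n`-homogeneous polynomials from `E` to `F` (a polynomial is identified
with its unique symmetric generating multilinear map). -/
def SymmCM (𝕜 : Type*) [NontriviallyNormedField 𝕜] (n : ℕ) (E F : Type*)
    [NormedAddCommGroup E] [NormedSpace 𝕜 E] [NormedAddCommGroup F] [NormedSpace 𝕜 F] :
    Submodule 𝕜 (ContinuousMultilinearMap 𝕜 (fun _ : Fin n => E) F) where
  carrier := {A | ∀ (σ : Equiv.Perm (Fin n)) (v : Fin n → E), A (v ∘ σ) = A v}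
  add_mem' := by intro a b ha hb σ v; simp [ha σ v, hb σ v]
  zero_mem' := by intro σ v; simp
  smul_mem' := by intro c a ha σ v; simp [ha σ v]

/-- The Banach space of continuous `n`-homogeneous polynomials from `E` to `F`. -/
abbrev HomPoly (𝕜 : Type*) [NontriviallyNormedField 𝕜] (n : ℕ) (E F : Type*)
    [NormedAddCommGroup E] [NormedSpace 𝕜 E] [NormedAddCommGroup F] [NormedSpace 𝕜 F] :=
  ↥(SymmCM 𝕜 n E F)

/-- Evaluation of a homogeneous polynomial on the diagonal. -/
def HomPoly.eval {𝕜 : Type*} [NontriviallyNormedField 𝕜] {n : ℕ} {E F : Type*}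
    [NormedAddCommGroup E] [NormedSpace 𝕜 E] [NormedAddCommGroup F] [NormedSpace 𝕜 F]
    (P : HomPoly 𝕜 n E F) (x : E) : F :=
  (P : ContinuousMultilinearMap 𝕜 (fun _ : Fin n => E) F) (fun _ => x)

open scoped Pointwise

/-- A homogeneous polynomial is compact if it maps bounded sets to relatively compact sets. -/
def IsCompactPoly {𝕜 : Type*} [NontriviallyNormedField 𝕜] {n : ℕ} {E F : Type*}
    [NormedAddCommGroup E] [NormedSpace 𝕜 E] [NormedAddCommGroup F] [NormedSpace 𝕜 F]
    (P : HomPoly 𝕜 n E F) : Prop :=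
  ∀ S : Set E, Bornology.IsBounded S → IsCompact (closure (P.eval '' S))

def compactPolys (𝕜 : Type*) [NontriviallyNormedField 𝕜] (n : ℕ) (E F : Type*)
    [NormedAddCommGroup E] [NormedSpace 𝕜 E] [NormedAddCommGroup F] [NormedSpace 𝕜 F] :
    Submodule 𝕜 (HomPoly 𝕜 n E F) where
  carrier := {P | IsCompactPoly P}
  add_mem' := by
    intro P Q hP hQ S hS
    have h1 := hP S hS
    have h2 := hQ S hS
    refine (h1.add h2).of_isClosed_subset isClosed_closure
      (closure_minimal ?_ (h1.add h2).isClosed)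
    rintro y ⟨x, hx, rfl⟩
    have : (P + Q).eval x = P.eval x + Q.eval x := by
      simp [HomPoly.eval]
    rw [this]
    exact Set.add_mem_add (subset_closure (Set.mem_image_of_mem _ hx))
      (subset_closure (Set.mem_image_of_mem _ hx))
  zero_mem' := by
    intro S _
    refine (isCompact_singleton (x := (0:F))).of_isClosed_subset isClosed_closure
      (closure_minimal ?_ isClosed_singleton)
    rintro y ⟨x, -, rfl⟩
    simp [HomPoly.eval]
  smul_mem' := by
    intro c P hP S hS
    have h1 := hP S hS
    have h2 : IsCompact (c • closure (P.eval '' S)) := h1.smul c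
    refine h2.of_isClosed_subset isClosed_closure (closure_minimal ?_ h2.isClosed)
    rintro y ⟨x, hx, rfl⟩
    have : (c • P).eval x = c • P.eval x := by simp [HomPoly.eval]
    rw [this]
    exact Set.smul_mem_smul_set (subset_closure (Set.mem_image_of_mem _ hx))

/-!
Composition `P ↦ A ∘ P ∘ B` with bounded operators is functorial in `(A, B)` and maps compact
polynomials to compact polynomials, so it descends to the quotients by the compact polynomials,
still functorially. Hence `B₁ ∘ A₁ = id` and `B₂ ∘ A₂ = id` make the operator induced by
`Q ↦ B₂ ∘ Q ∘ A₁` a left inverse of the one induced by `P ↦ A₂ ∘ P ∘ B₁`.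
-/

namespace HomPoly

variable {𝕜 : Type*} [NontriviallyNormedField 𝕜] {n : ℕ}
  {E F G M N X : Type*}
  [NormedAddCommGroup E] [NormedSpace 𝕜 E] [NormedAddCommGroup F] [NormedSpace 𝕜 F]
  [NormedAddCommGroup G] [NormedSpace 𝕜 G] [NormedAddCommGroup M] [NormedSpace 𝕜 M]
  [NormedAddCommGroup N] [NormedSpace 𝕜 N] [NormedAddCommGroup X] [NormedSpace 𝕜 X]

def compL (A : N →L[𝕜] F) (B : E →L[𝕜] M) : HomPoly 𝕜 n M N →L[𝕜] HomPoly 𝕜 n E F :=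
  (ContinuousLinearMap.compContinuousMultilinearMapL 𝕜 _ N F A ∘L
      ContinuousMultilinearMap.compContinuousLinearMapL (fun _ => B) ∘L
      (SymmCM 𝕜 n M N).subtypeL).codRestrict (SymmCM 𝕜 n E F) fun P σ v =>
    congrArg A (P.2 σ fun i => B (v i))

@[simp]
theorem compL_apply (A : N →L[𝕜] F) (B : E →L[𝕜] M) (P : HomPoly 𝕜 n M N) (v : Fin n → E) :
    (compL A B P : ContinuousMultilinearMap 𝕜 (fun _ : Fin n => E) F) v =
      A ((P : ContinuousMultilinearMap 𝕜 (fun _ : Fin n => M) N) fun i => B (v i)) :=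
  rfl

theorem eval_compL (A : N →L[𝕜] F) (B : E →L[𝕜] M) (P : HomPoly 𝕜 n M N) (x : E) :
    (compL A B P).eval x = A (P.eval (B x)) :=
  rfl

theorem compL_comp_compL (A' : F →L[𝕜] G) (B' : X →L[𝕜] E) (A : N →L[𝕜] F)
    (B : E →L[𝕜] M) :
    (compL A' B' ∘L compL A B : HomPoly 𝕜 n M N →L[𝕜] HomPoly 𝕜 n X G) =
      compL (A' ∘L A) (B ∘L B') := by
  ext P v
  simp only [ContinuousLinearMap.comp_apply, compL_apply]

@[simp]
theorem compL_id : (compL (.id 𝕜 N) (.id 𝕜 M) : HomPoly 𝕜 n M N →L[𝕜] HomPoly 𝕜 n M N) =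
    .id 𝕜 _ := by
  ext P v
  simp only [compL_apply, ContinuousLinearMap.id_apply]

theorem _root_.IsCompactPoly.compL {P : HomPoly 𝕜 n M N} (hP : IsCompactPoly P)
    (A : N →L[𝕜] F) (B : E →L[𝕜] M) : IsCompactPoly (compL A B P) := by
  intro S hS
  have hK : IsCompact (A '' closure (P.eval '' (B '' S))) :=
    (hP _ (B.lipschitz.isBounded_image hS)).image A.continuous
  refine hK.of_isClosed_subset isClosed_closure (closure_minimal ?_ hK.isClosed)
  rintro _ ⟨x, hx, rfl⟩
  rw [eval_compL]
  exact ⟨P.eval (B x), subset_closure ⟨B x, ⟨x, hx, rfl⟩, rfl⟩, rfl⟩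

def quotCompL (A : N →L[𝕜] F) (B : E →L[𝕜] M) :
    (HomPoly 𝕜 n M N ⧸ compactPolys 𝕜 n M N) →L[𝕜] (HomPoly 𝕜 n E F ⧸ compactPolys 𝕜 n E F) :=
  (compactPolys 𝕜 n M N).liftQL ((compactPolys 𝕜 n E F).mkQL ∘L compL A B)
    fun _ hP => (Submodule.Quotient.mk_eq_zero _).2 (hP.compL A B)

theorem quotCompL_mk (A : N →L[𝕜] F) (B : E →L[𝕜] M) (P : HomPoly 𝕜 n M N) :
    quotCompL A B (Submodule.Quotient.mk P) = Submodule.Quotient.mk (compL A B P) :=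
  rfl

theorem quotCompL_comp_quotCompL (A' : F →L[𝕜] G) (B' : X →L[𝕜] E) (A : N →L[𝕜] F)
    (B : E →L[𝕜] M) :
    (quotCompL A' B' ∘L quotCompL A B :
        (HomPoly 𝕜 n M N ⧸ compactPolys 𝕜 n M N) →L[𝕜] _) =
      quotCompL (A' ∘L A) (B ∘L B') := by
  ext Q
  obtain ⟨P, rfl⟩ := Submodule.Quotient.mk_surjective _ Q
  simp only [ContinuousLinearMap.comp_apply, quotCompL_mk, ← compL_comp_compL]

@[simp]
theorem quotCompL_id :
    (quotCompL (.id 𝕜 N) (.id 𝕜 M) : (HomPoly 𝕜 n M N ⧸ compactPolys 𝕜 n M N) →L[𝕜] _) =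
      .id 𝕜 _ := by
  ext Q
  obtain ⟨P, rfl⟩ := Submodule.Quotient.mk_surjective _ Q
  simp only [quotCompL_mk, compL_id, ContinuousLinearMap.id_apply]

end HomPoly

theorem quotient_polySpace_complemented_general (𝕜 E F M N : Type*) [RCLike 𝕜]
    [NormedAddCommGroup E] [NormedSpace 𝕜 E]
    [NormedAddCommGroup F] [NormedSpace 𝕜 F]
    [NormedAddCommGroup M] [NormedSpace 𝕜 M]
    [NormedAddCommGroup N] [NormedSpace 𝕜 N]
    (n : ℕ)
    (hM : ∃ (A₁ : M →L[𝕜] E) (B₁ : E →L[𝕜] M), B₁.comp A₁ = ContinuousLinearMap.id 𝕜 M)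
    (hN : ∃ (A₂ : N →L[𝕜] F) (B₂ : F →L[𝕜] N), B₂.comp A₂ = ContinuousLinearMap.id 𝕜 N) :
    ∃ (C : (HomPoly 𝕜 n M N ⧸ compactPolys 𝕜 n M N) →L[𝕜]
            (HomPoly 𝕜 n E F ⧸ compactPolys 𝕜 n E F))
      (D : (HomPoly 𝕜 n E F ⧸ compactPolys 𝕜 n E F) →L[𝕜]
            (HomPoly 𝕜 n M N ⧸ compactPolys 𝕜 n M N)),
      D.comp C = ContinuousLinearMap.id 𝕜 (HomPoly 𝕜 n M N ⧸ compactPolys 𝕜 n M N) := by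
  obtain ⟨A₁, B₁, hBA₁⟩ := hM
  obtain ⟨A₂, B₂, hBA₂⟩ := hN
  refine ⟨HomPoly.quotCompL A₂ B₁, HomPoly.quotCompL B₂ A₁, ?_⟩
  rw [HomPoly.quotCompL_comp_quotCompL, hBA₂, hBA₁, HomPoly.quotCompL_id]

/-- If `E` and `F` contain complemented subspaces isomorphic to `M` and `N`, then for `n ≥ 1`
the quotient `P(ⁿE;F)/P_K(ⁿE;F)` contains a complemented subspace isomorphic to
`P(ⁿM;N)/P_K(ⁿM;N)`. -/
theorem quotient_polySpace_complemented (𝕜 E F M N : Type*) [RCLike 𝕜]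
    [NormedAddCommGroup E] [NormedSpace 𝕜 E] [CompleteSpace E]
    [NormedAddCommGroup F] [NormedSpace 𝕜 F] [CompleteSpace F]
    [NormedAddCommGroup M] [NormedSpace 𝕜 M] [CompleteSpace M]
    [NormedAddCommGroup N] [NormedSpace 𝕜 N] [CompleteSpace N]
    (n : ℕ) (hn : 1 ≤ n)
    (hM : ∃ (A₁ : M →L[𝕜] E) (B₁ : E →L[𝕜] M), B₁.comp A₁ = ContinuousLinearMap.id 𝕜 M)
    (hN : ∃ (A₂ : N →L[𝕜] F) (B₂ : F →L[𝕜] N), B₂.comp A₂ = ContinuousLinearMap.id 𝕜 N) :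
    ∃ (C : (HomPoly 𝕜 n M N ⧸ compactPolys 𝕜 n M N) →L[𝕜]
            (HomPoly 𝕜 n E F ⧸ compactPolys 𝕜 n E F))
      (D : (HomPoly 𝕜 n E F ⧸ compactPolys 𝕜 n E F) →L[𝕜]
            (HomPoly 𝕜 n M N ⧸ compactPolys 𝕜 n M N)),
      D.comp C = ContinuousLinearMap.id 𝕜 (HomPoly 𝕜 n M N ⧸ compactPolys 𝕜 n M N) :=
  quotient_polySpace_complemented_general 𝕜 E F M N n hM hN
end
end
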